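/- arXiv:2310.19862 — 6 statements merged into one kernel-verified Lean document; each statement's English description precedes it below -/
import Mathlib

section
/- Let (a_k)_{k≥0} be a sequence of nonnegative integers with a_0 > 0 and a_k > 0 for at least one k > 0, and let ζ(z) = Σ_{k=0}^∞ a_k z^k have radius of convergence R ∈ (0, ∞]. Then the function Z(z) = z·ζ'(z)/ζ(z) is strictly increasing on the real interval (0, R). -/
/-!
Let `m = Z(x)` be the mean of `k` under the weights `a_k x^k`, and let `x < y`, `q = y / x > 1`.
Since `k ↦ q^k` is increasing, every term `a_k x^k (k - m) (q^k - q^m)` is nonnegative, and one of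
them is positive because the weights are not concentrated at a single `k`. As
`Σ a_k x^k (k - m) = 0`, the sum of these terms is `Σ a_k y^k (k - m)`, so `Z(y) > m`.
Termwise differentiation inside the disc of convergence gives `z ζ'(z) = Σ k a_k z^k`.
-/

theorem ENNReal.exists_lt_ofReal_lt {R : ENNReal} {x : ℝ} (h : ENNReal.ofReal x < R) :
    ∃ t : ℝ, x < t ∧ ENNReal.ofReal t < R := by
  obtain ⟨t, -, hxt, htR⟩ := ENNReal.lt_iff_exists_real_btwn.1 h
  exact ⟨t, (ENNReal.ofReal_lt_ofReal_iff'.1 hxt).1, htR⟩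

theorem StrictMono.sub_mul_sub_pos {f : ℝ → ℝ} (hf : StrictMono f) {a b : ℝ} (hab : a ≠ b) :
    0 < (a - b) * (f a - f b) := by
  rcases hab.lt_or_gt with h | h
  · exact mul_pos_of_neg_of_neg (sub_neg.2 h) (sub_neg.2 (hf h))
  · exact mul_pos (sub_pos.2 h) (sub_pos.2 (hf h))

theorem StrictMono.sub_mul_sub_nonneg {f : ℝ → ℝ} (hf : StrictMono f) (a b : ℝ) :
    0 ≤ (a - b) * (f a - f b) := by
  rcases eq_or_ne a b with rfl | hab
  · simp
  · exact (hf.sub_mul_sub_pos hab).le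

theorem summable_nat_mul_mul_pow_of_abs_lt {c : ℕ → ℝ} {x t : ℝ} (hxt : |x| < t)
    (hc : Summable fun k => c k * t ^ k) : Summable fun k => k * (c k * x ^ k) := by
  have ht : 0 < t := (abs_nonneg x).trans_lt hxt
  have hq : ‖|x| / t‖ < 1 := by
    rwa [Real.norm_eq_abs, abs_div, abs_abs, abs_of_pos ht, div_lt_one ht]
  have hbound (k : ℕ) : ‖c k * t ^ k‖ ≤ ∑' j, ‖c j * t ^ j‖ :=
    hc.norm.le_tsum k fun j _ => norm_nonneg _
  refine .of_norm_bounded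
    ((summable_pow_mul_geometric_of_norm_lt_one 1 hq).mul_left (∑' j, ‖c j * t ^ j‖))
    fun k => ?_
  calc ‖k * (c k * x ^ k)‖ = ‖c k * t ^ k‖ * (k ^ 1 * (|x| / t) ^ k) := by
        simp only [norm_mul, norm_pow, Real.norm_eq_abs, Nat.abs_cast, abs_of_pos ht, div_pow]
        field_simp
    _ ≤ _ := by gcongr; exact hbound k

theorem hasDerivAt_tsum_mul_pow {c : ℕ → ℝ} {z s : ℝ} (hzs : |z| < s)
    (hc : Summable fun k => c k * s ^ k) :
    HasDerivAt (fun w => ∑' k, c k * w ^ k) (∑' k, c k * (k * z ^ (k - 1))) z := by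
  obtain ⟨t, hzt, hts⟩ := exists_between hzs
  have ht : 0 < t := (abs_nonneg z).trans_lt hzt
  have habs : Summable fun k => |c k| * s ^ k := by
    simpa [abs_mul, abs_pow, abs_of_pos (ht.trans hts)] using hc.abs
  have hu : Summable fun k => k * (|c k| * t ^ k) / t :=
    (summable_nat_mul_mul_pow_of_abs_lt (by rwa [abs_of_pos ht]) habs).div_const t
  have hz : Summable fun k => c k * z ^ k :=
    .of_norm_bounded hc.norm fun k => by
      rw [norm_mul, norm_mul, norm_pow, norm_pow, Real.norm_eq_abs z,
        Real.norm_of_nonneg (ht.trans hts).le]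
      gcongr
  refine hasDerivAt_tsum_of_isPreconnected hu isOpen_Ioo isPreconnected_Ioo
    (fun k y _ => (hasDerivAt_pow k y).const_mul (c k)) (fun k y hy => ?_)
    (abs_lt.1 hzt) hz (abs_lt.1 hzt)
  rcases eq_or_ne k 0 with rfl | hk
  · simp
  calc ‖c k * (k * y ^ (k - 1))‖ = k * (|c k| * |y| ^ (k - 1)) := by
        simp only [norm_mul, norm_pow, Real.norm_eq_abs, Nat.abs_cast]; ring
    _ ≤ k * (|c k| * t ^ (k - 1)) := by gcongr; exact (abs_lt.2 hy).le
    _ = k * (|c k| * t ^ k) / t := by rw [← pow_sub_one_mul hk t]; field_simp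

theorem mul_deriv_tsum_mul_pow {c : ℕ → ℝ} {z s : ℝ} (hzs : |z| < s)
    (hc : Summable fun k => c k * s ^ k) :
    z * deriv (fun w => ∑' k, c k * w ^ k) z = ∑' k, k * (c k * z ^ k) := by
  rw [(hasDerivAt_tsum_mul_pow hzs hc).deriv, ← tsum_mul_left]
  congr 1 with k
  rcases eq_or_ne k 0 with rfl | hk
  · simp
  · rw [← pow_sub_one_mul hk z]; ring

theorem strictMonoOn_tsum_nat_mul_div_tsum {c : ℕ → ℝ} (hc : ∀ k, 0 ≤ c k) {i j : ℕ}
    (hij : i ≠ j) (hi : 0 < c i) (hj : 0 < c j) :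
    StrictMonoOn (fun z => (∑' k, k * (c k * z ^ k)) / ∑' k, c k * z ^ k)
      {z | 0 < z ∧ (Summable fun k => c k * z ^ k) ∧ Summable fun k => k * (c k * z ^ k)} := by
  rintro x ⟨hx, hA, hB⟩ y ⟨hy, hA', hB'⟩ hxy
  set A := ∑' k, c k * x ^ k
  set m := (∑' k, k * (c k * x ^ k)) / A
  set q := y / x
  have hApos : 0 < A :=
    hA.tsum_pos (fun k => mul_nonneg (hc k) (pow_nonneg hx.le k)) i (mul_pos hi (pow_pos hx i))
  have hA'pos : 0 < ∑' k, c k * y ^ k :=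
    hA'.tsum_pos (fun k => mul_nonneg (hc k) (pow_nonneg hy.le k)) i (mul_pos hi (pow_pos hy i))
  have hq : StrictMono (q ^ · : ℝ → ℝ) :=
    Real.strictMono_rpow_of_base_gt_one ((one_lt_div hx).2 hxy)
  have hqk (k : ℕ) : x ^ k * q ^ (k : ℝ) = y ^ k := by
    rw [Real.rpow_natCast, div_pow, mul_div_cancel₀ _ (pow_pos hx k).ne']
  obtain ⟨l, hl, hlm⟩ : ∃ l, 0 < c l ∧ (l : ℝ) ≠ m := by
    by_cases h : (i : ℝ) = m
    · exact ⟨j, hj, fun h' => hij (by exact_mod_cast h.trans h'.symm)⟩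
    · exact ⟨i, hi, h⟩
  let g k := c k * x ^ k * ((k - m) * (q ^ (k : ℝ) - q ^ m))
  have hg : HasSum g ((∑' k, k * (c k * y ^ k)) - m * ∑' k, c k * y ^ k
      - q ^ m * ((∑' k, k * (c k * x ^ k)) - m * A)) := by
    have hg_eq : g = fun k => k * (c k * y ^ k) - m * (c k * y ^ k)
        - q ^ m * (k * (c k * x ^ k) - m * (c k * x ^ k)) := by
      funext k
      simp only [g, ← hqk k]
      ring
    rw [hg_eq]
    exact (hB'.hasSum.sub (hA'.hasSum.mul_left m)).sub
      ((hB.hasSum.sub (hA.hasSum.mul_left m)).mul_left (q ^ m))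
  have hpos := hasSum_lt (f := fun _ => 0) (g := g)
    (fun k => mul_nonneg (mul_nonneg (hc k) (pow_nonneg hx.le k)) (hq.sub_mul_sub_nonneg _ _))
    (mul_pos (mul_pos hl (pow_pos hx l)) (hq.sub_mul_sub_pos hlm)) hasSum_zero hg
  rw [div_mul_cancel₀ _ hApos.ne', sub_self, mul_zero, sub_zero, sub_pos] at hpos
  exact (lt_div_iff₀ hA'pos).2 hpos

theorem typical_ee_Z_strictMono_general (a : ℕ → ℕ) (ha0 : 0 < a 0) (hk : ∃ k, 0 < k ∧ 0 < a k)
    (R : ENNReal)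
    (hconv : ∀ x : ℝ, 0 ≤ x → ENNReal.ofReal x < R →
      Summable (fun k : ℕ => (a k : ℝ) * x ^ k)) :
    StrictMonoOn
      (fun z : ℝ => z * deriv (fun w : ℝ => ∑' k : ℕ, (a k : ℝ) * w ^ k) z /
        ∑' k : ℕ, (a k : ℝ) * z ^ k)
      {z : ℝ | 0 < z ∧ ENNReal.ofReal z < R} := by
  obtain ⟨k, hk, hak⟩ := hk
  have hmean := strictMonoOn_tsum_nat_mul_div_tsum (fun k => Nat.cast_nonneg (a k)) hk.ne'
    (Nat.cast_pos.2 hak) (Nat.cast_pos.2 ha0)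
  have hsummable_beyond (z : ℝ) (hz : 0 < z ∧ ENNReal.ofReal z < R) :
      ∃ t, |z| < t ∧ Summable fun k => (a k : ℝ) * t ^ k := by
    obtain ⟨t, hzt, htR⟩ := ENNReal.exists_lt_ofReal_lt hz.2
    exact ⟨t, by rwa [abs_of_pos hz.1], hconv t (hz.1.trans hzt).le htR⟩
  refine (hmean.mono fun z hz => ?_).congr fun z hz => ?_
  · obtain ⟨t, hzt, ht⟩ := hsummable_beyond z hz
    exact ⟨hz.1, hconv z hz.1.le hz.2, summable_nat_mul_mul_pow_of_abs_lt hzt ht⟩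
  · obtain ⟨t, hzt, ht⟩ := hsummable_beyond z hz
    simp only [mul_deriv_tsum_mul_pow hzt ht]

/-- For a power series ζ(z) = Σ aₖ zᵏ with nonnegative integer coefficients,
a₀ > 0, some aₖ > 0 with k > 0, and radius of convergence R ∈ (0, ∞], the function
Z(z) = z ζ'(z)/ζ(z) is strictly increasing on (0, R). -/
theorem typical_ee_Z_strictMono (a : ℕ → ℕ) (ha0 : 0 < a 0) (hk : ∃ k, 0 < k ∧ 0 < a k)
    (R : ENNReal) (hR : 0 < R)
    (hconv : ∀ x : ℝ, 0 ≤ x → ENNReal.ofReal x < R →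
      Summable (fun k : ℕ => (a k : ℝ) * x ^ k))
    (hdiv : ∀ x : ℝ, 0 ≤ x → R < ENNReal.ofReal x →
      ¬ Summable (fun k : ℕ => (a k : ℝ) * x ^ k)) :
    StrictMonoOn
      (fun z : ℝ => z * deriv (fun w : ℝ => ∑' k : ℕ, (a k : ℝ) * w ^ k) z /
        ∑' k : ℕ, (a k : ℝ) * z ^ k)
      {z : ℝ | 0 < z ∧ ENNReal.ofReal z < R} :=
  typical_ee_Z_strictMono_general a ha0 hk R hconv
end

section
/- Let ζ(z) = Σ_{k=0}^{n_max} a_k z^k be a polynomial (n_max ≥ 1) with nonnegative integer coefficients, a_0 > 0 and a_{n_max} > 0. Then for every n ∈ (0, n_max) there exists a unique z_0 > 0 such that z_0·ζ'(z_0) = n·ζ(z_0). Moreover z_0 is a strictly increasing function of n. -/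
/-!
Write `ζ = p` as a real polynomial with nonnegative coefficients and `E = X * p'`, so that the
saddle point equation says that the elasticity `r(z) = E(z) / p(z)` equals `n`. For `0 ≤ x < y`,
`E(y) p(x) - E(x) p(y)` is a double sum over pairs `(i, j)` of coefficients; pairing `(i, j)` with
`(j, i)` gives `cᵢ cⱼ (i - j) (yⁱ xʲ - xⁱ yʲ) ≥ 0`, strictly positive for `(n_max, 0)`. Hence `r`
increases strictly on `[0, ∞)`, from `r(0) = 0` to its limit `n_max` at infinity (the leading
coefficients of `E` and `p` differ by the factor `n_max`), and the intermediate value theorem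
gives the unique solution.
-/

open Filter Topology Set

/-- The polynomial generating function ζ(z) = Σ_{k=0}^{n_max} aₖ zᵏ. -/
noncomputable def polyZeta (a : ℕ → ℕ) (nmax : ℕ) (w : ℝ) : ℝ :=
  ∑ k ∈ Finset.range (nmax + 1), (a k : ℝ) * w ^ k

open Polynomial

theorem Finset.sum_sum_pos_of_add_swap {ι M : Type*} [AddCommMonoid M] [LinearOrder M]
    [IsOrderedCancelAddMonoid M] {s : Finset ι} {f : ι → ι → M}
    (hf : ∀ i ∈ s, ∀ j ∈ s, 0 ≤ f i j + f j i) {i₀ j₀ : ι} (hi₀ : i₀ ∈ s) (hj₀ : j₀ ∈ s)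
    (h₀ : 0 < f i₀ j₀ + f j₀ i₀) : 0 < ∑ i ∈ s, ∑ j ∈ s, f i j := by
  have hsym : 0 < ∑ i ∈ s, ∑ j ∈ s, (f i j + f j i) :=
    Finset.sum_pos' (fun i hi => Finset.sum_nonneg fun j hj => hf i hi j hj)
      ⟨i₀, hi₀, Finset.sum_pos' (fun j hj => hf i₀ hi₀ j hj) ⟨j₀, hj₀, h₀⟩⟩
  rw [Finset.sum_congr rfl fun i _ => Finset.sum_add_distrib, Finset.sum_add_distrib,
    Finset.sum_comm (f := fun i j => f j i)] at hsym
  exact lt_of_not_ge fun h => (add_nonpos h h).not_gt hsym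

theorem sub_mul_pow_sub_pow_nonneg {R : Type*} [CommRing R] [LinearOrder R] [IsStrictOrderedRing R]
    {x y : R} (hx : 0 ≤ x) (hxy : x ≤ y) (i j : ℕ) :
    0 ≤ ((i : R) - j) * (y ^ i * x ^ j - x ^ i * y ^ j) := by
  wlog hji : j ≤ i generalizing i j
  · have := this j i (by omega)
    linarith
  obtain ⟨d, rfl⟩ := Nat.exists_eq_add_of_le hji
  have hfactor : (((j + d : ℕ) : R) - j) * (y ^ (j + d) * x ^ j - x ^ (j + d) * y ^ j) =
      d * (x ^ j * y ^ j) * (y ^ d - x ^ d) := by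
    push_cast; ring
  have hy : 0 ≤ y := hx.trans hxy
  rw [hfactor]
  exact mul_nonneg (by positivity) (sub_nonneg.2 (pow_le_pow_left₀ hx hxy d))

namespace Polynomial

theorem coeff_X_mul_derivative {R : Type*} [CommSemiring R] (p : R[X]) (n : ℕ) :
    (X * derivative p).coeff n = n * p.coeff n := by
  rcases n with _ | n
  · simp
  · rw [coeff_X_mul, coeff_derivative]; push_cast; ring

theorem natDegree_X_mul_derivative_le {R : Type*} [CommSemiring R] (p : R[X]) :
    (X * derivative p).natDegree ≤ p.natDegree :=
  natDegree_le_iff_coeff_eq_zero.2 fun n hn => by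
    rw [coeff_X_mul_derivative, coeff_eq_zero_of_natDegree_lt (by exact_mod_cast hn), mul_zero]

theorem eval_X_mul_derivative_eq_sum {R : Type*} [CommSemiring R] (p : R[X]) (x : R) :
    (X * derivative p).eval x = ∑ i ∈ Finset.range (p.natDegree + 1), i * p.coeff i * x ^ i := by
  rw [eval_eq_sum_range' (Nat.lt_succ_of_le (natDegree_X_mul_derivative_le p))]
  simp only [coeff_X_mul_derivative]

theorem eval_pos_of_coeff_nonneg {p : ℝ[X]} (hcoeff : ∀ i, 0 ≤ p.coeff i) (hcoeff0 : 0 < p.coeff 0)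
    {x : ℝ} (hx : 0 ≤ x) : 0 < p.eval x := by
  rw [eval_eq_sum_range]
  exact Finset.sum_pos' (fun i _ => by have := hcoeff i; positivity)
    ⟨0, by simp, by simpa using hcoeff0⟩

/-- `x p'(x) / p(x)`; for `p = ζ` this is the mean site occupation at fugacity `x`. -/
noncomputable def elasticity (p : ℝ[X]) (x : ℝ) : ℝ :=
  (X * derivative p).eval x / p.eval x

section elasticity

variable {p : ℝ[X]}

theorem mul_deriv_eval_eq_mul_eval_iff {x n : ℝ} (hx : p.eval x ≠ 0) :
    x * deriv (fun w => p.eval w) x = n * p.eval x ↔ elasticity p x = n := by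
  rw [elasticity, div_eq_iff hx, Polynomial.deriv, eval_mul, eval_X]

theorem eval_X_mul_derivative_mul_eval_lt (hcoeff : ∀ i, 0 ≤ p.coeff i)
    (hcoeff0 : 0 < p.coeff 0) (hdeg : 0 < p.natDegree) {x y : ℝ} (hx : 0 ≤ x) (hxy : x < y) :
    (X * derivative p).eval x * p.eval y < (X * derivative p).eval y * p.eval x := by
  have hlead : 0 < p.coeff p.natDegree :=
    (hcoeff _).lt_of_ne' (leadingCoeff_ne_zero.2 (ne_zero_of_natDegree_gt hdeg))
  rw [← sub_pos, eval_X_mul_derivative_eq_sum, eval_X_mul_derivative_eq_sum,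
    eval_eq_sum_range (x := y), eval_eq_sum_range (x := x), Finset.sum_mul_sum, Finset.sum_mul_sum, ← Finset.sum_sub_distrib]
  simp_rw [← Finset.sum_sub_distrib]
  refine Finset.sum_sum_pos_of_add_swap (fun i _ j _ => ?_) (i₀ := p.natDegree) (j₀ := 0)
    (by simp) (by simp) ?_
  · convert mul_nonneg (mul_nonneg (hcoeff i) (hcoeff j))
      (sub_mul_pow_sub_pow_nonneg hx hxy.le i j) using 1
    ring
  · convert mul_pos (mul_pos hlead hcoeff0)
      (mul_pos (Nat.cast_pos.2 hdeg) (sub_pos.2 (pow_lt_pow_left₀ hxy hx hdeg.ne'))) using 1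
    push_cast
    ring

theorem strictMonoOn_elasticity (hcoeff : ∀ i, 0 ≤ p.coeff i) (hcoeff0 : 0 < p.coeff 0)
    (hdeg : 0 < p.natDegree) : StrictMonoOn (elasticity p) (Ici 0) := by
  intro x hx y hy hxy
  rw [elasticity, elasticity, div_lt_div_iff₀ (eval_pos_of_coeff_nonneg hcoeff hcoeff0 hx)
    (eval_pos_of_coeff_nonneg hcoeff hcoeff0 hy)]
  exact eval_X_mul_derivative_mul_eval_lt hcoeff hcoeff0 hdeg hx hxy

theorem tendsto_elasticity_atTop (hdeg : 0 < p.natDegree) :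
    Tendsto (elasticity p) atTop (𝓝 p.natDegree) := by
  have hp : p ≠ 0 := ne_zero_of_natDegree_gt hdeg
  have htop : (X * derivative p).coeff p.natDegree = p.natDegree * p.leadingCoeff :=
    coeff_X_mul_derivative p _
  have hnat : (X * derivative p).natDegree = p.natDegree :=
    natDegree_eq_of_le_of_coeff_ne_zero (natDegree_X_mul_derivative_le p)
      (htop ▸ mul_ne_zero (Nat.cast_ne_zero.2 hdeg.ne') (leadingCoeff_ne_zero.2 hp))
  have hdegree : (X * derivative p).degree = p.degree := by
    rw [degree_eq_natDegree (ne_zero_of_natDegree_gt (hnat ▸ hdeg)), degree_eq_natDegree hp, hnat]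
  have hlead : (X * derivative p).leadingCoeff = p.natDegree * p.leadingCoeff := by
    rw [← htop, ← hnat]; rfl
  have := div_tendsto_atTop_leadingCoeff_div_of_degree_eq _ _ hdegree
  rwa [hlead, mul_div_cancel_right₀ _ (leadingCoeff_ne_zero.2 hp)] at this

theorem existsUnique_elasticity_eq (hcoeff : ∀ i, 0 ≤ p.coeff i) (hcoeff0 : 0 < p.coeff 0)
    (hdeg : 0 < p.natDegree) {n : ℝ} (hn : n ∈ Ioo 0 (p.natDegree : ℝ)) :
    ∃! z, 0 < z ∧ elasticity p z = n := by
  obtain ⟨y, hny, hy⟩ :=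
    (((tendsto_elasticity_atTop hdeg).eventually (lt_mem_nhds hn.2)).and
      (eventually_gt_atTop 0)).exists
  have hcont : ContinuousOn (elasticity p) (Icc 0 y) :=
    (X * derivative p).continuousOn.div p.continuousOn fun x hx =>
      (eval_pos_of_coeff_nonneg hcoeff hcoeff0 hx.1).ne'
  obtain ⟨z, hz, hzn⟩ := intermediate_value_Ioo hy.le hcont ⟨by simpa [elasticity] using hn.1, hny⟩
  exact ⟨z, ⟨hz.1, hzn⟩, fun w ⟨hw, hwn⟩ =>
    (strictMonoOn_elasticity hcoeff hcoeff0 hdeg).injOn hw.le hz.1.le (hwn.trans hzn.symm)⟩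

end elasticity

end Polynomial

noncomputable def zetaPoly (a : ℕ → ℕ) (nmax : ℕ) : ℝ[X] :=
  ∑ k ∈ Finset.range (nmax + 1), C (a k : ℝ) * X ^ k

section zetaPoly

variable (a : ℕ → ℕ) (nmax : ℕ)

theorem eval_zetaPoly (w : ℝ) : (zetaPoly a nmax).eval w = polyZeta a nmax w := by
  simp [zetaPoly, polyZeta, eval_finsetSum]

theorem coeff_zetaPoly (k : ℕ) : (zetaPoly a nmax).coeff k = if k ≤ nmax then (a k : ℝ) else 0 := by
  simp [zetaPoly]

theorem natDegree_zetaPoly (hatop : 0 < a nmax) : (zetaPoly a nmax).natDegree = nmax :=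
  natDegree_eq_of_le_of_coeff_ne_zero
    (natDegree_le_iff_coeff_eq_zero.2 fun k hk => by
      rw [coeff_zetaPoly, if_neg (by exact_mod_cast hk.not_ge)])
    (by rw [coeff_zetaPoly, if_pos le_rfl]; exact_mod_cast hatop.ne')

end zetaPoly

/-- For a polynomial ζ with nonnegative integer coefficients, a₀ > 0,
a_{n_max} > 0, n_max ≥ 1: for every n ∈ (0, n_max) there is a unique z₀ > 0 with
z₀ ζ'(z₀) = n ζ(z₀), and z₀ is strictly increasing as a function of n. -/
theorem typical_ee_saddle_exists_unique_mono (nmax : ℕ) (hnmax : 1 ≤ nmax) (a : ℕ → ℕ)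
    (ha0 : 0 < a 0) (hatop : 0 < a nmax) :
    (∀ n : ℝ, n ∈ Set.Ioo (0 : ℝ) (nmax : ℝ) →
      ∃! z0 : ℝ, 0 < z0 ∧ z0 * deriv (polyZeta a nmax) z0 = n * polyZeta a nmax z0) ∧
    (∀ n₁ n₂ z₁ z₂ : ℝ, n₁ ∈ Set.Ioo (0 : ℝ) (nmax : ℝ) → n₂ ∈ Set.Ioo (0 : ℝ) (nmax : ℝ) →
      n₁ < n₂ →
      0 < z₁ → z₁ * deriv (polyZeta a nmax) z₁ = n₁ * polyZeta a nmax z₁ →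
      0 < z₂ → z₂ * deriv (polyZeta a nmax) z₂ = n₂ * polyZeta a nmax z₂ →
      z₁ < z₂) := by
  set p := zetaPoly a nmax
  have hcoeff : ∀ i, 0 ≤ p.coeff i := fun i => by
    rw [coeff_zetaPoly]; split_ifs <;> positivity
  have hcoeff0 : 0 < p.coeff 0 := by
    rw [coeff_zetaPoly, if_pos (Nat.zero_le _)]; exact_mod_cast ha0
  have hdeg : p.natDegree = nmax := natDegree_zetaPoly a nmax hatop
  have hsaddle {z n : ℝ} (hz : 0 < z) :
      z * deriv (polyZeta a nmax) z = n * polyZeta a nmax z ↔ elasticity p z = n := by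
    rw [← funext (eval_zetaPoly a nmax)]
    exact mul_deriv_eval_eq_mul_eval_iff (eval_pos_of_coeff_nonneg hcoeff hcoeff0 hz.le).ne'
  have hmono := strictMonoOn_elasticity hcoeff hcoeff0 (hdeg ▸ hnmax)
  refine ⟨fun n hn => ?_, fun n₁ n₂ z₁ z₂ _ _ h₁₂ hz₁ h₁ hz₂ h₂ => ?_⟩
  · obtain ⟨z, ⟨hz, hzn⟩, huniq⟩ :=
      existsUnique_elasticity_eq hcoeff hcoeff0 (hdeg ▸ hnmax) (hdeg ▸ hn)
    exact ⟨z, ⟨hz, (hsaddle hz).2 hzn⟩, fun w ⟨hw, hwn⟩ => huniq w ⟨hw, (hsaddle hw).1 hwn⟩⟩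
  · rw [hsaddle hz₁] at h₁
    rw [hsaddle hz₂] at h₂
    exact (hmono.lt_iff_lt hz₁.le hz₂.le).1 (h₁ ▸ h₂ ▸ h₁₂)
end

section
/- Let ζ be a power series with nonnegative coefficients, a_0 > 0 and at least one a_k > 0 with k > 0. Then for any z in (0,R), the expression [ζ'(z) + z ζ''(z)]·ζ(z) − z·ζ'(z)² equals Σ_{k=0}^∞ ( (k+1)² a_{k+1} a_0 + Σ_{l=1}^{⌊k/2⌋} (2l−1−k)² a_l a_{k−l+1} ) z^k, and in particular is strictly positive. -/
/-!
Inside its disc of convergence a power series can be differentiated termwise and multiplied by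
Cauchy products, so `(ζ' + z ζ'') ζ - z ζ'²` is the sum of the formal power series
`(φ' + X φ'') φ - φ' (X φ')`, whose `n`-th coefficient is `∑_{i+j=n+1} i (i - j) aᵢ aⱼ`.
Pairing `(i, j)` with `(j, i)` and using `i (i - j) + j (j - i) = (i - j)²` turns this into a sum
of squares `∑_{i<j} (i - j)² aᵢ aⱼ`; the pair `(0, n + 1)` gives `(n + 1)² aₙ₊₁ a₀`, which is
positive for `n + 1 = k`.
-/

open Filter Topology Set

/-- The generating function ζ(z) = Σ_{k≥0} aₖ zᵏ. -/
noncomputable def tsumZeta (a : ℕ → ℕ) (z : ℝ) : ℝ := ∑' k : ℕ, (a k : ℝ) * z ^ k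

open Finset PowerSeries

theorem Finset.sum_range_succ_eq_add_sum_reflect {M : Type*} [AddCommMonoid M] (f : ℕ → M)
    (m : ℕ) :
    ∑ l ∈ range (m + 1), f l =
      ∑ l ∈ range ((m + 1) / 2), f l + ∑ l ∈ range (m / 2 + 1), f (m - l) := by
  rw [← sum_range_add_sum_Ico _ (show (m + 1) / 2 ≤ m + 1 by omega)]
  congr 1
  have := sum_Ico_reflect (fun j => f (m - j)) ((m + 1) / 2) (n := m) le_rfl
  rw [show m + 1 - (m + 1) / 2 = m / 2 + 1 by omega, Nat.sub_self, ← range_eq_Ico] at this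
  rw [← this]
  refine sum_congr rfl fun j hj => ?_
  rw [Nat.sub_sub_self (by rw [mem_Ico] at hj; omega)]

theorem Finset.Nat.sum_antidiagonal_mul_sub_eq_sum_sq {R : Type*} [CommRing R] (c : ℕ → R)
    (m : ℕ) :
    ∑ p ∈ antidiagonal m, (p.1 : R) * (p.1 - p.2) * (c p.1 * c p.2) =
      ∑ l ∈ range ((m + 1) / 2), ((l : R) - (m - l : ℕ)) ^ 2 * (c l * c (m - l)) := by
  set F : ℕ → ℕ → R := fun i j => (i : R) * (i - j) * (c i * c j)
  have hreflected : ∑ l ∈ range (m / 2 + 1), F (m - l) (m - (m - l)) =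
      ∑ l ∈ range ((m + 1) / 2), F (m - l) l := by
    calc _ = ∑ l ∈ range (m / 2 + 1), F (m - l) l :=
          sum_congr rfl fun l hl => by rw [Nat.sub_sub_self (by rw [mem_range] at hl; omega)]
      _ = _ := by
        -- the only extra index is the diagonal `l = m - l`, where `F l l = 0`
        refine (sum_subset (range_subset_range.2 (by omega)) fun l hl hl' => ?_).symm
        rw [mem_range] at hl hl'
        rw [show m - l = l by omega]
        simp [F]
  rw [Nat.sum_antidiagonal_eq_sum_range_succ F, sum_range_succ_eq_add_sum_reflect, hreflected,
    ← sum_add_distrib]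
  refine sum_congr rfl fun l _ => ?_
  simp only [F]
  ring

theorem tsum_nat_succ_eq_of_zero {M : Type*} [AddCommMonoid M] [TopologicalSpace M] {f : ℕ → M}
    (h : f 0 = 0) : ∑' n, f (n + 1) = ∑' n, f n :=
  Nat.succ_injective.tsum_eq fun n hn => by
    cases n with
    | zero => exact absurd h hn
    | succ k => exact Set.mem_range_self k

namespace PowerSeries

theorem coeff_X_mul_derivative {R : Type*} [CommSemiring R] (φ : R⟦X⟧) (k : ℕ) :
    coeff k (X * d⁄dX R φ) = k * coeff k φ := by
  cases k with
  | zero => simp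
  | succ k =>
    rw [coeff_succ_X_mul, coeff_derivative, mul_comm]
    push_cast
    ring

section Formal

variable {R : Type*} [CommRing R]

/-- For `Z = X φ' / φ` one has `Z' = derivZNumerator φ / φ²`. -/
noncomputable def derivZNumerator (φ : R⟦X⟧) : R⟦X⟧ :=
  (d⁄dX R φ + X * d⁄dX R (d⁄dX R φ)) * φ - d⁄dX R φ * (X * d⁄dX R φ)

theorem coeff_derivZNumerator (φ : R⟦X⟧) (n : ℕ) :
    coeff n (derivZNumerator φ) =
      ((n : R) + 1) ^ 2 * coeff (n + 1) φ * coeff 0 φ +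
        ∑ l ∈ Icc 1 (n / 2), (2 * (l : R) - 1 - n) ^ 2 * coeff l φ * coeff (n - l + 1) φ := by
  set c : ℕ → R := fun k => coeff k φ
  have hpair : coeff n (derivZNumerator φ) =
      ∑ p ∈ antidiagonal (n + 1), (p.1 : R) * (p.1 - p.2) * (c p.1 * c p.2) := by
    rw [derivZNumerator, Nat.sum_antidiagonal_succ, map_sub, coeff_mul, coeff_mul,
      ← sum_sub_distrib]
    simp only [map_add, coeff_X_mul_derivative, coeff_derivative, c]
    push_cast
    simp only [zero_mul, zero_add]
    refine sum_congr rfl fun p _ => ?_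
    ring
  rw [hpair, Nat.sum_antidiagonal_mul_sub_eq_sum_sq, show (n + 1 + 1) / 2 = n / 2 + 1 by omega,
    sum_range_succ', add_comm, ← Finset.Ico_add_one_right_eq_Icc, sum_Ico_eq_sum_range,
    Nat.add_sub_cancel]
  congr 1
  · simp only [c]
    push_cast
    ring
  · refine sum_congr rfl fun l hl => ?_
    rw [Finset.mem_range] at hl
    rw [Nat.add_sub_add_right, show n - (1 + l) + 1 = n - l by omega, add_comm 1 l]
    simp only [c]
    rw [Nat.cast_sub (by omega)]
    push_cast
    ring

end Formal

section Real

noncomputable def tsumAt (φ : ℝ⟦X⟧) (y : ℝ) : ℝ := ∑' k, coeff k φ * y ^ k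

def AbsSummableAt (φ : ℝ⟦X⟧) (y : ℝ) : Prop := Summable fun k => ‖coeff k φ * y ^ k‖

def AbsSummableOnBall (φ : ℝ⟦X⟧) (r : ℝ) : Prop := ∀ y, |y| < r → AbsSummableAt φ y

variable {φ ψ : ℝ⟦X⟧} {y r : ℝ}

theorem coeff_mul_mul_pow (φ ψ : ℝ⟦X⟧) (y : ℝ) (n : ℕ) :
    coeff n (φ * ψ) * y ^ n =
      ∑ p ∈ antidiagonal n, coeff p.1 φ * y ^ p.1 * (coeff p.2 ψ * y ^ p.2) := by
  rw [coeff_mul, sum_mul]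
  refine sum_congr rfl fun p hp => ?_
  rw [← mem_antidiagonal.1 hp, pow_add]
  ring

theorem AbsSummableAt.add (hφ : AbsSummableAt φ y) (hψ : AbsSummableAt ψ y) :
    AbsSummableAt (φ + ψ) y :=
  (Summable.add hφ hψ).of_nonneg_of_le (fun _ => norm_nonneg _) fun k => by
    rw [map_add, add_mul]
    exact norm_add_le _ _

theorem AbsSummableAt.sub (hφ : AbsSummableAt φ y) (hψ : AbsSummableAt ψ y) :
    AbsSummableAt (φ - ψ) y :=
  (Summable.add hφ hψ).of_nonneg_of_le (fun _ => norm_nonneg _) fun k => by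
    rw [map_sub, sub_mul]
    exact norm_sub_le _ _

theorem AbsSummableAt.mul (hφ : AbsSummableAt φ y) (hψ : AbsSummableAt ψ y) :
    AbsSummableAt (φ * ψ) y := by
  refine (summable_norm_sum_mul_antidiagonal_of_summable_norm hφ hψ).congr fun n => ?_
  rw [coeff_mul_mul_pow]

theorem AbsSummableAt.X_mul (hφ : AbsSummableAt φ y) : AbsSummableAt (X * φ) y := by
  rw [AbsSummableAt, ← summable_nat_add_iff 1]
  refine (hφ.mul_left ‖y‖).congr fun k => ?_
  rw [coeff_succ_X_mul, pow_succ, norm_mul, norm_mul, norm_mul, norm_pow]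
  ring

theorem tsumAt_add (hφ : AbsSummableAt φ y) (hψ : AbsSummableAt ψ y) :
    tsumAt (φ + ψ) y = tsumAt φ y + tsumAt ψ y := by
  simp only [tsumAt, map_add, add_mul]
  exact hφ.of_norm.tsum_add hψ.of_norm

theorem tsumAt_sub (hφ : AbsSummableAt φ y) (hψ : AbsSummableAt ψ y) :
    tsumAt (φ - ψ) y = tsumAt φ y - tsumAt ψ y := by
  simp only [tsumAt, map_sub, sub_mul]
  exact hφ.of_norm.tsum_sub hψ.of_norm

theorem tsumAt_mul (hφ : AbsSummableAt φ y) (hψ : AbsSummableAt ψ y) :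
    tsumAt (φ * ψ) y = tsumAt φ y * tsumAt ψ y := by
  simp only [tsumAt, tsum_mul_tsum_eq_tsum_sum_antidiagonal_of_summable_norm hφ hψ,
    coeff_mul_mul_pow]

theorem tsumAt_X_mul (φ : ℝ⟦X⟧) (y : ℝ) : tsumAt (X * φ) y = y * tsumAt φ y := by
  rw [tsumAt, ← tsum_nat_succ_eq_of_zero (by simp), tsumAt, ← tsum_mul_left]
  refine tsum_congr fun k => ?_
  rw [coeff_succ_X_mul, pow_succ]
  ring

theorem AbsSummableOnBall.derivative (h : AbsSummableOnBall φ r) :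
    AbsSummableOnBall (d⁄dX ℝ φ) r := by
  intro y hy
  obtain ⟨w, hyw, hwr⟩ := exists_between hy
  have hw : 0 < w := (abs_nonneg y).trans_lt hyw
  have hsw : AbsSummableAt φ w := h w (by rwa [abs_of_pos hw])
  have hq : ‖|y| / w‖ < 1 := by
    rw [Real.norm_of_nonneg (by positivity)]
    exact (div_lt_one hw).2 hyw
  have hgeom : Summable fun k : ℕ => ((k : ℝ) + 1) * (|y| / w) ^ k :=
    ((summable_pow_mul_geometric_of_norm_lt_one 1 hq).add
      (summable_geometric_of_norm_lt_one hq)).congr fun k => by ring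
  refine Summable.of_nonneg_of_le (fun _ => norm_nonneg _) (fun k => ?_)
    (hgeom.mul_left ((∑' k, ‖coeff k φ * w ^ k‖) / w))
  calc ‖coeff k (d⁄dX ℝ φ) * y ^ k‖
      = ‖coeff (k + 1) φ * w ^ (k + 1)‖ / w * (((k : ℝ) + 1) * (|y| / w) ^ k) := by
        simp only [coeff_derivative, norm_mul, norm_pow, Real.norm_eq_abs, abs_of_pos hw,
          div_pow]
        rw [abs_of_nonneg (by positivity : (0 : ℝ) ≤ k + 1)]
        field_simp
        ring
    _ ≤ (∑' k, ‖coeff k φ * w ^ k‖) / w * (((k : ℝ) + 1) * (|y| / w) ^ k) := by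
        gcongr
        exact hsw.le_tsum (k + 1) fun _ _ => norm_nonneg _

theorem AbsSummableOnBall.hasDerivAt (h : AbsSummableOnBall φ r) (hy : |y| < r) :
    HasDerivAt (tsumAt φ) (tsumAt (d⁄dX ℝ φ) y) y := by
  obtain ⟨w, hyw, hwr⟩ := exists_between hy
  have hw : 0 < w := (abs_nonneg y).trans_lt hyw
  have hu : Summable fun n : ℕ => ‖coeff n φ * (n * w ^ (n - 1))‖ := by
    rw [← summable_nat_add_iff 1]
    refine (h.derivative w (by rwa [abs_of_pos hw])).congr fun k => ?_
    rw [coeff_derivative, Nat.add_sub_cancel]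
    push_cast
    ring_nf
  have hbound : ∀ n (t : ℝ), t ∈ Metric.ball 0 w →
      ‖coeff n φ * (n * t ^ (n - 1))‖ ≤ ‖coeff n φ * (n * w ^ (n - 1))‖ := by
    intro n t ht
    rw [mem_ball_zero_iff, Real.norm_eq_abs] at ht
    simp only [norm_mul, norm_pow, Real.norm_of_nonneg hw.le, Real.norm_eq_abs]
    gcongr
  have hmem : y ∈ Metric.ball (0 : ℝ) w := by rwa [mem_ball_zero_iff, Real.norm_eq_abs]
  have hsum : tsumAt (d⁄dX ℝ φ) y = ∑' n : ℕ, coeff n φ * (n * y ^ (n - 1)) := by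
    rw [tsumAt, ← tsum_nat_succ_eq_of_zero (f := fun n => coeff n φ * (n * y ^ (n - 1))) (by simp)]
    refine tsum_congr fun k => ?_
    rw [coeff_derivative, Nat.add_sub_cancel]
    push_cast
    ring
  rw [hsum]
  exact hasDerivAt_tsum_of_isPreconnected hu Metric.isOpen_ball (convex_ball 0 w).isPreconnected
    (fun n t _ => (hasDerivAt_pow n t).const_mul (coeff n φ)) hbound hmem (h y hy).of_norm hmem

theorem AbsSummableOnBall.deriv_deriv (h : AbsSummableOnBall φ r) (hy : |y| < r) :
    deriv (deriv (tsumAt φ)) y = tsumAt (d⁄dX ℝ (d⁄dX ℝ φ)) y := by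
  have hderiv : deriv (tsumAt φ) =ᶠ[𝓝 y] tsumAt (d⁄dX ℝ φ) := by
    have : IsOpen {t : ℝ | |t| < r} := isOpen_lt continuous_abs continuous_const
    filter_upwards [this.mem_nhds hy] with t ht
    exact (h.hasDerivAt ht).deriv
  rw [hderiv.deriv_eq, (h.derivative.hasDerivAt hy).deriv]

theorem AbsSummableOnBall.derivZNumerator (h : AbsSummableOnBall φ r) :
    AbsSummableOnBall (derivZNumerator φ) r := fun y hy =>
  ((h.derivative y hy).add (h.derivative.derivative y hy).X_mul |>.mul (h y hy)).sub
    ((h.derivative y hy).mul (h.derivative y hy).X_mul)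

theorem tsumAt_derivZNumerator (h : AbsSummableOnBall φ r) (hy : |y| < r) :
    tsumAt (derivZNumerator φ) y =
      (deriv (tsumAt φ) y + y * deriv (deriv (tsumAt φ)) y) * tsumAt φ y -
        y * deriv (tsumAt φ) y ^ 2 := by
  have h₀ := h y hy
  have h₁ := h.derivative y hy
  have h₂ := h.derivative.derivative y hy
  rw [derivZNumerator, tsumAt_sub ((h₁.add h₂.X_mul).mul h₀) (h₁.mul h₁.X_mul),
    tsumAt_mul (h₁.add h₂.X_mul) h₀, tsumAt_mul h₁ h₁.X_mul, tsumAt_add h₁ h₂.X_mul,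
    tsumAt_X_mul, tsumAt_X_mul, (h.hasDerivAt hy).deriv, h.deriv_deriv hy]
  ring

end Real

end PowerSeries

theorem typical_ee_Z_derivative_numerator_general (a : ℕ → ℕ) (ha0 : 0 < a 0)
    (hk : ∃ k, 0 < k ∧ 0 < a k)
    (R : ENNReal)
    (hconv : ∀ x : ℝ, 0 ≤ x → ENNReal.ofReal x < R →
      Summable (fun k : ℕ => (a k : ℝ) * x ^ k)) :
    ∀ z : ℝ, 0 < z → ENNReal.ofReal z < R →
      (deriv (tsumZeta a) z + z * deriv (deriv (tsumZeta a)) z) * tsumZeta a z -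
          z * (deriv (tsumZeta a) z) ^ 2 =
        (∑' k : ℕ,
          ((((k + 1) ^ 2 * a (k + 1) * a 0 : ℕ) : ℝ) +
            ∑ l ∈ Finset.Icc 1 (k / 2),
              (((2 * (l : ℤ) - 1 - (k : ℤ)) ^ 2 : ℤ) : ℝ) * (a l : ℝ) * (a (k - l + 1) : ℝ)) *
            z ^ k) ∧
      0 < (deriv (tsumZeta a) z + z * deriv (deriv (tsumZeta a)) z) * tsumZeta a z -
            z * (deriv (tsumZeta a) z) ^ 2 := by
  intro z hz hzR
  obtain ⟨w, -, hzw, hwR⟩ := ENNReal.lt_iff_exists_real_btwn.1 hzR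
  set φ : ℝ⟦X⟧ := mk fun k => (a k : ℝ)
  have hζ : tsumZeta a = tsumAt φ := funext fun y => by simp [tsumZeta, tsumAt, φ]
  have hφ : AbsSummableOnBall φ w := fun y hy =>
    (hconv |y| (abs_nonneg y) ((ENNReal.ofReal_le_ofReal hy.le).trans_lt hwR)).congr fun k => by
      simp [φ, norm_mul, norm_pow]
  have hz : |z| < w := by rw [abs_of_pos hz]; exact (ENNReal.ofReal_lt_ofReal_iff'.1 hzw).1
  have hcoeff : ∀ k, coeff k (derivZNumerator φ) * z ^ k =
      ((((k + 1) ^ 2 * a (k + 1) * a 0 : ℕ) : ℝ) +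
        ∑ l ∈ Finset.Icc 1 (k / 2),
          (((2 * (l : ℤ) - 1 - (k : ℤ)) ^ 2 : ℤ) : ℝ) * (a l : ℝ) * (a (k - l + 1) : ℝ)) * z ^ k :=
    fun k => by simp [coeff_derivZNumerator, φ]
  rw [hζ, ← tsumAt_derivZNumerator hφ hz, tsumAt, ← tsum_congr hcoeff]
  obtain ⟨K, hK, haK⟩ := hk
  refine ⟨rfl, (hφ.derivZNumerator z hz).of_norm.tsum_pos
    (fun k => by rw [hcoeff]; positivity) (K - 1) ?_⟩
  rw [hcoeff, Nat.sub_add_cancel hK]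
  have hlead : 0 < K ^ 2 * a K * a 0 := by positivity
  exact mul_pos (add_pos_of_pos_of_nonneg (by exact_mod_cast hlead) (by positivity))
    (by positivity)

/-- For ζ with nonnegative coefficients, a₀ > 0, some aₖ > 0 (k > 0):
for z ∈ (0,R),
[ζ'(z) + z ζ''(z)] ζ(z) − z ζ'(z)²
 = Σ_k ( (k+1)² a_{k+1} a₀ + Σ_{l=1}^{⌊k/2⌋} (2l−1−k)² a_l a_{k−l+1} ) zᵏ > 0. -/
theorem typical_ee_Z_derivative_numerator (a : ℕ → ℕ) (ha0 : 0 < a 0)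
    (hk : ∃ k, 0 < k ∧ 0 < a k)
    (R : ENNReal) (hR : 0 < R)
    (hconv : ∀ x : ℝ, 0 ≤ x → ENNReal.ofReal x < R →
      Summable (fun k : ℕ => (a k : ℝ) * x ^ k))
    (hdiv : ∀ x : ℝ, 0 ≤ x → R < ENNReal.ofReal x →
      ¬ Summable (fun k : ℕ => (a k : ℝ) * x ^ k)) :
    ∀ z : ℝ, 0 < z → ENNReal.ofReal z < R →
      (deriv (tsumZeta a) z + z * deriv (deriv (tsumZeta a)) z) * tsumZeta a z -
          z * (deriv (tsumZeta a) z) ^ 2 =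
        (∑' k : ℕ,
          ((((k + 1) ^ 2 * a (k + 1) * a 0 : ℕ) : ℝ) +
            ∑ l ∈ Finset.Icc 1 (k / 2),
              (((2 * (l : ℤ) - 1 - (k : ℤ)) ^ 2 : ℤ) : ℝ) * (a l : ℝ) * (a (k - l + 1) : ℝ)) *
            z ^ k) ∧
      0 < (deriv (tsumZeta a) z + z * deriv (deriv (tsumZeta a)) z) * tsumZeta a z -
            z * (deriv (tsumZeta a) z) ^ 2 :=
  typical_ee_Z_derivative_numerator_general a ha0 hk R hconv
end

section
/- With β(n) = ln ζ(z_0(n)) − n ln z_0(n) defined via the unique positive saddle point z_0(n), the function β is strictly concave on (0, n_max): β''(n) < 0 for all n ∈ (0, n_max). -/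
open Filter Topology Set

/-!
`zetaMean a x = x ζ'(x) / ζ(x)` is the mean index of the weights `aₙ xⁿ`, and its derivative is
their variance divided by `x`, which is positive. So `zetaMean` is strictly increasing on
`(0, R)`, and the saddle point `z₀` is its inverse: `z₀' = 1 / zetaMean'(z₀) > 0`.
Since `ζ'(z₀)/ζ(z₀) = n / z₀`, the terms containing `z₀'` cancel in `β'`, leaving
`β'(n) = -log z₀(n)`; hence `β''(n) = -z₀'(n) / z₀(n) < 0`.
-/

lemma summable_mul_natCast_pow_mul_pow {c : ℕ → ℝ} {s x : ℝ} (j : ℕ)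
    (hs : Summable fun n => c n * s ^ n) (hxs : |x| < s) :
    Summable fun n => c n * (n : ℝ) ^ j * x ^ n := by
  have hs0 : 0 < s := (abs_nonneg x).trans_lt hxs
  have hq : |(|x| / s)| < 1 := by
    rwa [abs_of_nonneg (by positivity), div_lt_one hs0]
  have hbound : ∀ᶠ n : ℕ in atTop, (n : ℝ) ^ j * (|x| / s) ^ n ≤ 1 :=
    (tendsto_pow_const_mul_const_pow_of_abs_lt_one j hq).eventually (ge_mem_nhds one_pos)
  refine Summable.of_norm_bounded_eventually hs.abs ?_
  rw [Nat.cofinite_eq_atTop]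
  filter_upwards [hbound] with n hn
  have hsplit :
      ‖c n * (n : ℝ) ^ j * x ^ n‖ = |c n * s ^ n| * ((n : ℝ) ^ j * (|x| / s) ^ n) := by
    rw [Real.norm_eq_abs, abs_mul, abs_mul, abs_mul, abs_pow, abs_pow, abs_pow, Nat.abs_cast,
      abs_of_pos hs0, div_pow]
    field_simp
  rw [hsplit]
  exact mul_le_of_le_one_right (abs_nonneg _) hn

lemma continuousAt_of_leftInvOn_of_strictMonoOn {g z : ℝ → ℝ} {U V : Set ℝ} (hU : IsOpen U)
    (hV : IsOpen V) (hg : StrictMonoOn g U) (hz : MapsTo z V U) (hgz : LeftInvOn g z V) {n : ℝ}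
    (hn : n ∈ V) (hgc : ContinuousAt g (z n)) : ContinuousAt z n := by
  have hmono : MonotoneOn z V := fun m hm m' hm' hmm' => not_lt.1 fun h => by
    have := hg (hz hm') (hz hm) h
    rw [hgz hm, hgz hm'] at this
    exact hmm'.not_gt this
  refine continuousAt_of_monotoneOn_of_image_mem_nhds hmono (hV.mem_nhds hn) ?_
  have hnbhd : U ∩ g ⁻¹' V ∈ 𝓝 (z n) :=
    inter_mem (hU.mem_nhds (hz hn))
      (hgc.preimage_mem_nhds (by rw [hgz hn]; exact hV.mem_nhds hn))
  refine mem_of_superset hnbhd fun w ⟨hwU, hwV⟩ => ⟨g w, hwV, ?_⟩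
  exact hg.injOn (hz hwV) hwU (hgz hwV)

lemma hasDerivAt_of_leftInvOn_of_strictMonoOn {g z : ℝ → ℝ} {U V : Set ℝ} (hU : IsOpen U)
    (hV : IsOpen V) (hg : StrictMonoOn g U) (hz : MapsTo z V U) (hgz : LeftInvOn g z V)
    {n g' : ℝ} (hn : n ∈ V) (hg' : HasDerivAt g g' (z n)) (hg'0 : g' ≠ 0) :
    HasDerivAt z g'⁻¹ n :=
  hg'.of_local_left_inverse
    (continuousAt_of_leftInvOn_of_strictMonoOn hU hV hg hz hgz hn hg'.continuousAt) hg'0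
    (eventually_of_mem (hV.mem_nhds hn) fun _ hm => hgz hm)

lemma hasDerivAt_comp_sub_mul_log {F z : ℝ → ℝ} {m s : ℝ} (hz : HasDerivAt z s m)
    (hzm : 0 < z m) (hF : HasDerivAt F (m / z m) (z m)) :
    HasDerivAt (fun m => F (z m) - m * Real.log (z m)) (-Real.log (z m)) m := by
  refine ((hF.comp m hz).sub ((hasDerivAt_id m).mul
    ((Real.hasDerivAt_log hzm.ne').comp m hz))).congr_deriv ?_
  simp only [id, Function.comp_apply]
  field_simp
  ring

def posBelow (R : ENNReal) : Set ℝ := {x | 0 < x ∧ ENNReal.ofReal x < R}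

lemma isOpen_posBelow (R : ENNReal) : IsOpen (posBelow R) :=
  (isOpen_lt continuous_const continuous_id).inter
    (isOpen_lt ENNReal.continuous_ofReal continuous_const)

lemma convex_posBelow (R : ENNReal) : Convex ℝ (posBelow R) :=
  OrdConnected.convex ⟨fun _ hx _ hy _ hz =>
    ⟨hx.1.trans_le hz.1, (ENNReal.ofReal_le_ofReal hz.2).trans_lt hy.2⟩⟩

lemma exists_gt_mem_posBelow {R : ENNReal} {x : ℝ} (hx : x ∈ posBelow R) :
    ∃ r ∈ posBelow R, x < r := by
  obtain ⟨r, hxr, hr⟩ := Eventually.exists_gt ((isOpen_posBelow R).mem_nhds hx)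
  exact ⟨r, hr, hxr⟩

noncomputable def zetaMoment (a : ℕ → ℕ) (j : ℕ) (x : ℝ) : ℝ :=
  ∑' n : ℕ, (a n : ℝ) * (n : ℝ) ^ j * x ^ n

noncomputable def zetaMean (a : ℕ → ℕ) (x : ℝ) : ℝ := zetaMoment a 1 x / zetaMoment a 0 x

lemma tsumZeta_eq_zetaMoment_zero (a : ℕ → ℕ) : tsumZeta a = zetaMoment a 0 := by
  ext x
  simp only [tsumZeta, zetaMoment, pow_zero, mul_one]

section Moments

variable {a : ℕ → ℕ} {R : ENNReal}
  (hconv : ∀ x : ℝ, 0 ≤ x → ENNReal.ofReal x < R → Summable fun k : ℕ => (a k : ℝ) * x ^ k)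
include hconv

lemma summable_zetaMoment (j : ℕ) {x : ℝ} (hx : x ∈ posBelow R) :
    Summable fun n : ℕ => (a n : ℝ) * (n : ℝ) ^ j * x ^ n := by
  obtain ⟨s, hs, hxs⟩ := exists_gt_mem_posBelow hx
  exact summable_mul_natCast_pow_mul_pow j (hconv s hs.1.le hs.2)
    (by rwa [abs_of_pos hx.1])

lemma hasDerivAt_zetaMoment (j : ℕ) {x : ℝ} (hx : x ∈ posBelow R) :
    HasDerivAt (zetaMoment a j) (zetaMoment a (j + 1) x / x) x := by
  obtain ⟨r, hr, hxr⟩ := exists_gt_mem_posBelow hx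
  have hx0 : 0 < x := hx.1
  have hterm : ∀ (n : ℕ) (y : ℝ), y ∈ Ioo (x / 2) r →
      HasDerivAt (fun y => (a n : ℝ) * (n : ℝ) ^ j * y ^ n)
        ((a n : ℝ) * (n : ℝ) ^ (j + 1) * y ^ n / y) y := by
    intro n y hy
    have hy0 : y ≠ 0 := (half_pos hx0).trans hy.1 |>.ne'
    refine ((hasDerivAt_pow n y).const_mul ((a n : ℝ) * (n : ℝ) ^ j)).congr_deriv ?_
    rcases n with _ | n
    · simp
    · rw [Nat.add_sub_cancel, pow_succ y]; field_simp; push_cast; ring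
  -- On `(x / 2, r)` the factor `1 / y` stays below `2 / x`, which gives a summable majorant.
  have hbound : ∀ (n : ℕ) (y : ℝ), y ∈ Ioo (x / 2) r →
      ‖(a n : ℝ) * (n : ℝ) ^ (j + 1) * y ^ n / y‖
        ≤ (a n : ℝ) * (n : ℝ) ^ (j + 1) * r ^ n / (x / 2) := by
    intro n y hy
    have hy0 : 0 < y := (half_pos hx0).trans hy.1
    rw [Real.norm_eq_abs, abs_of_nonneg (by positivity)]
    gcongr
    exacts [by have := hr.1; positivity, hy.2.le, hy.1.le]
  have hxI : x ∈ Ioo (x / 2) r := ⟨half_lt_self hx0, hxr⟩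
  have h := hasDerivAt_tsum_of_isPreconnected ((summable_zetaMoment hconv (j + 1) hr).div_const _)
    isOpen_Ioo isPreconnected_Ioo hterm hbound hxI (summable_zetaMoment hconv j hx) hxI
  rwa [tsum_div_const] at h

lemma zetaMoment_zero_pos (ha0 : 0 < a 0) {x : ℝ} (hx : x ∈ posBelow R) :
    0 < zetaMoment a 0 x :=
  (summable_zetaMoment hconv 0 hx).tsum_pos (fun n => by have := hx.1; positivity) 0
    (by simpa using ha0)

/-- `M₀ M₂ - M₁² = M₀ ∑ aₙ (n - M₁/M₀)² xⁿ` is (up to `M₀²`) the variance of the weights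
`aₙ xⁿ`; it is positive because these weights charge the two distinct indices `0` and `k`. -/
lemma sq_zetaMoment_one_lt (ha0 : 0 < a 0) (hk : ∃ k, 0 < k ∧ 0 < a k) {x : ℝ}
    (hx : x ∈ posBelow R) :
    zetaMoment a 1 x ^ 2 < zetaMoment a 0 x * zetaMoment a 2 x := by
  have hx0 : 0 < x := hx.1
  have hM0 := zetaMoment_zero_pos hconv ha0 hx
  set t := zetaMoment a 1 x / zetaMoment a 0 x
  have S0 := summable_zetaMoment hconv 0 hx
  have S1 := (summable_zetaMoment hconv 1 hx).mul_left (2 * t)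
  have S2 := summable_zetaMoment hconv 2 hx
  have S := (S2.sub S1).add (S0.mul_left (t ^ 2))
  have hexpand : ∑' n : ℕ, (a n : ℝ) * ((n : ℝ) - t) ^ 2 * x ^ n
      = zetaMoment a 2 x - 2 * t * zetaMoment a 1 x + t ^ 2 * zetaMoment a 0 x := by
    rw [zetaMoment, zetaMoment, zetaMoment, ← tsum_mul_left, ← tsum_mul_left, ← S2.tsum_sub S1,
      ← (S2.sub S1).tsum_add (S0.mul_left _)]
    congr 1; ext n; ring
  obtain ⟨i, hai, hit⟩ : ∃ i, 0 < a i ∧ (i : ℝ) ≠ t := by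
    obtain ⟨k, hk0, hak⟩ := hk
    by_cases ht0 : t = 0
    · exact ⟨k, hak, by rw [ht0]; exact_mod_cast hk0.ne'⟩
    · exact ⟨0, ha0, by simpa using Ne.symm ht0⟩
  have hvar : 0 < ∑' n : ℕ, (a n : ℝ) * ((n : ℝ) - t) ^ 2 * x ^ n := by
    refine Summable.tsum_pos (S.congr fun n => by ring) (fun n => by positivity) i ?_
    have := sub_ne_zero.2 hit
    positivity
  have hM1 : t * zetaMoment a 0 x = zetaMoment a 1 x := div_mul_cancel₀ _ hM0.ne'
  have hvar' : zetaMoment a 0 x * (∑' n : ℕ, (a n : ℝ) * ((n : ℝ) - t) ^ 2 * x ^ n)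
      = zetaMoment a 0 x * zetaMoment a 2 x - zetaMoment a 1 x ^ 2 := by
    rw [hexpand, ← hM1]; ring
  linarith [mul_pos hM0 hvar]

lemma hasDerivAt_zetaMean (ha0 : 0 < a 0) {x : ℝ} (hx : x ∈ posBelow R) :
    HasDerivAt (zetaMean a)
      ((zetaMoment a 0 x * zetaMoment a 2 x - zetaMoment a 1 x ^ 2) / (x * zetaMoment a 0 x ^ 2))
      x := by
  have hM0 := (zetaMoment_zero_pos hconv ha0 hx).ne'
  refine ((hasDerivAt_zetaMoment hconv 1 hx).div
    (hasDerivAt_zetaMoment hconv 0 hx) hM0).congr_deriv ?_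
  have := hx.1.ne'
  field_simp

lemma deriv_zetaMean_pos (ha0 : 0 < a 0) (hk : ∃ k, 0 < k ∧ 0 < a k) {x : ℝ}
    (hx : x ∈ posBelow R) : 0 < deriv (zetaMean a) x := by
  rw [(hasDerivAt_zetaMean hconv ha0 hx).deriv]
  have := hx.1
  have := zetaMoment_zero_pos hconv ha0 hx
  exact div_pos (sub_pos.2 (sq_zetaMoment_one_lt hconv ha0 hk hx)) (by positivity)

lemma strictMonoOn_zetaMean (ha0 : 0 < a 0) (hk : ∃ k, 0 < k ∧ 0 < a k) :
    StrictMonoOn (zetaMean a) (posBelow R) :=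
  strictMonoOn_of_deriv_pos (convex_posBelow R)
    (fun _ hx => (hasDerivAt_zetaMean hconv ha0 hx).continuousAt.continuousWithinAt)
    (fun _ hx => deriv_zetaMean_pos hconv ha0 hk (interior_subset hx))

lemma hasDerivAt_log_tsumZeta (ha0 : 0 < a 0) {x : ℝ} (hx : x ∈ posBelow R) :
    HasDerivAt (fun y => Real.log (tsumZeta a y)) (zetaMean a x / x) x := by
  rw [tsumZeta_eq_zetaMoment_zero]
  refine ((hasDerivAt_zetaMoment hconv 0 hx).log
    (zetaMoment_zero_pos hconv ha0 hx).ne').congr_deriv ?_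
  rw [zetaMean, div_right_comm]

lemma saddle_eq_iff_zetaMean_eq (ha0 : 0 < a 0) {w n : ℝ} (hw : w ∈ posBelow R) :
    w * deriv (tsumZeta a) w = n * tsumZeta a w ↔ zetaMean a w = n := by
  rw [tsumZeta_eq_zetaMoment_zero, (hasDerivAt_zetaMoment hconv 0 hw).deriv,
    mul_div_cancel₀ _ hw.1.ne', zetaMean, div_eq_iff (zetaMoment_zero_pos hconv ha0 hw).ne']

end Moments

theorem typical_ee_beta_concave_general (a : ℕ → ℕ) (ha0 : 0 < a 0)
    (hk : ∃ k, 0 < k ∧ 0 < a k)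
    (R : ENNReal)
    (hconv : ∀ x : ℝ, 0 ≤ x → ENNReal.ofReal x < R →
      Summable (fun k : ℕ => (a k : ℝ) * x ^ k))
    (nmax : ENNReal)
    (z0 : ℝ → ℝ)
    (hz0 : ∀ n : ℝ, 0 < n → ENNReal.ofReal n < nmax →
      0 < z0 n ∧ ENNReal.ofReal (z0 n) < R ∧
        z0 n * deriv (tsumZeta a) (z0 n) = n * tsumZeta a (z0 n) ∧
        (∀ w : ℝ, 0 < w → ENNReal.ofReal w < R →
          w * deriv (tsumZeta a) w = n * tsumZeta a w → w = z0 n)) :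
    ∀ n : ℝ, 0 < n → ENNReal.ofReal n < nmax →
      deriv (deriv (fun m : ℝ => Real.log (tsumZeta a (z0 m)) - m * Real.log (z0 m))) n < 0 := by
  intro n hn0 hnmax
  have hn : n ∈ posBelow nmax := ⟨hn0, hnmax⟩
  have hmaps : MapsTo z0 (posBelow nmax) (posBelow R) :=
    fun m hm => ⟨(hz0 m hm.1 hm.2).1, (hz0 m hm.1 hm.2).2.1⟩
  have hinv : LeftInvOn (zetaMean a) z0 (posBelow nmax) :=
    fun m hm => (saddle_eq_iff_zetaMean_eq hconv ha0 (hmaps hm)).1 (hz0 m hm.1 hm.2).2.2.1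
  have hz0' : ∀ m ∈ posBelow nmax, HasDerivAt z0 (deriv (zetaMean a) (z0 m))⁻¹ m :=
    fun m hm => hasDerivAt_of_leftInvOn_of_strictMonoOn (isOpen_posBelow R)
      (isOpen_posBelow nmax) (strictMonoOn_zetaMean hconv ha0 hk) hmaps hinv hm
      (hasDerivAt_zetaMean hconv ha0 (hmaps hm)).differentiableAt.hasDerivAt
      (deriv_zetaMean_pos hconv ha0 hk (hmaps hm)).ne'
  have hβ' : deriv (fun m : ℝ => Real.log (tsumZeta a (z0 m)) - m * Real.log (z0 m))
      =ᶠ[𝓝 n] fun m => -Real.log (z0 m) := by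
    filter_upwards [(isOpen_posBelow nmax).mem_nhds hn] with m hm
    refine (hasDerivAt_comp_sub_mul_log (F := fun x => Real.log (tsumZeta a x))
      (hz0' m hm) (hmaps hm).1 ?_).deriv
    simpa only [hinv hm] using hasDerivAt_log_tsumZeta hconv ha0 (hmaps hm)
  have hβ'' : HasDerivAt (fun m => -Real.log (z0 m))
      (-((deriv (zetaMean a) (z0 n))⁻¹ / z0 n)) n :=
    ((hz0' n hn).log (hmaps hn).1.ne').neg
  rw [hβ'.deriv_eq, hβ''.deriv]
  have := (hmaps hn).1
  have := deriv_zetaMean_pos hconv ha0 hk (hmaps hn)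
  exact neg_neg_of_pos (by positivity)

/-- With β(n) = ln ζ(z₀(n)) − n ln z₀(n) defined via the unique positive
saddle point z₀(n), β is strictly concave on (0, n_max): β''(n) < 0 there. -/
theorem typical_ee_beta_concave (a : ℕ → ℕ) (ha0 : 0 < a 0)
    (hk : ∃ k, 0 < k ∧ 0 < a k)
    (R : ENNReal) (hR : 0 < R)
    (hconv : ∀ x : ℝ, 0 ≤ x → ENNReal.ofReal x < R →
      Summable (fun k : ℕ => (a k : ℝ) * x ^ k))
    (hdiv : ∀ x : ℝ, 0 ≤ x → R < ENNReal.ofReal x →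
      ¬ Summable (fun k : ℕ => (a k : ℝ) * x ^ k))
    (nmax : ENNReal) (hnmax : 0 < nmax)
    (z0 : ℝ → ℝ)
    (hz0 : ∀ n : ℝ, 0 < n → ENNReal.ofReal n < nmax →
      0 < z0 n ∧ ENNReal.ofReal (z0 n) < R ∧
        z0 n * deriv (tsumZeta a) (z0 n) = n * tsumZeta a (z0 n) ∧
        (∀ w : ℝ, 0 < w → ENNReal.ofReal w < R →
          w * deriv (tsumZeta a) w = n * tsumZeta a w → w = z0 n)) :
    ∀ n : ℝ, 0 < n → ENNReal.ofReal n < nmax →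
      deriv (deriv (fun m : ℝ => Real.log (tsumZeta a (z0 m)) - m * Real.log (z0 m))) n < 0 :=
  typical_ee_beta_concave_general a ha0 hk R hconv nmax z0 hz0
end

section
/- Let ζ(z) = Σ_{k=0}^{n_max} a_k z^k be a polynomial with n_max < ∞, nonnegative integer coefficients, a_0 > 0, a_{n_max} > 0. Then there exists a unique n* ∈ (0, n_max) with β'(n*) = 0, given explicitly by n* = ζ'(1)/ζ(1); moreover β'(n) > 0 for n ∈ (0, n*) and β'(n) < 0 for n ∈ (n*, n_max). -/
/-!
The elasticity `G(w) = w ζ'(w) / ζ(w)` maps `(0, ∞)` into `(0, n_max)`, vanishes at `0`, and is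
injective on `(0, ∞)` because the saddle point is unique; being continuous, it is strictly
increasing, and `z₀` is its continuous, strictly increasing inverse on `(0, n_max)`.
The saddle point `z₀(n)` minimises `w ↦ ln ζ(w) − n ln w`, so the envelope theorem gives
`β'(n) = −ln z₀(n)`. This vanishes exactly where `z₀(n) = 1`, i.e. at `n* = G(1) = ζ'(1)/ζ(1)`,
and has the sign of `1 − z₀(n)`.
-/

open Filter Topology Set

open Real

section Order

variable {α β : Type*}

theorem StrictMonoOn.strictMonoOn_of_leftInvOn [LinearOrder α] [Preorder β] {f : α → β}
    {g : β → α} {s : Set β} {t : Set α} (hf : StrictMonoOn f t) (hg : MapsTo g s t)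
    (hfg : LeftInvOn f g s) : StrictMonoOn g s :=
  fun _ hx _ hy hxy => (hf.lt_iff_lt (hg hx) (hg hy)).1 (by rwa [hfg hx, hfg hy])

theorem StrictMonoOn.continuousOn_of_isOpen_image [LinearOrder α] [TopologicalSpace α]
    [OrderTopology α] [LinearOrder β] [TopologicalSpace β] [OrderTopology β] [DenselyOrdered β]
    {f : α → β} {s : Set α} (hf : StrictMonoOn f s) (hs : IsOpen s) (hfs : IsOpen (f '' s)) :
    ContinuousOn f s := fun _ hx =>
  (hf.continuousAt_of_image_mem_nhds (hs.mem_nhds hx)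
    (hfs.mem_nhds (mem_image_of_mem f hx))).continuousWithinAt

theorem StrictMonoOn.continuousOn_of_leftInvOn [LinearOrder α] [TopologicalSpace α]
    [OrderTopology α] [DenselyOrdered α] [LinearOrder β] [TopologicalSpace β]
    [OrderTopology β] {f : α → β} {g : β → α} {s : Set β} {t : Set α}
    (hf : StrictMonoOn f t) (hft : MapsTo f t s) (hg : MapsTo g s t) (hfg : LeftInvOn f g s)
    (hs : IsOpen s) (ht : IsOpen t) : ContinuousOn g s := by
  have hgf : LeftInvOn g f t := hf.injOn.rightInvOn_of_leftInvOn hfg hft hg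
  refine (hf.strictMonoOn_of_leftInvOn hg hfg).continuousOn_of_isOpen_image hs ?_
  rwa [(InvOn.bijOn ⟨hfg, hgf⟩ hg hft).image_eq]

theorem ContinuousOn.strictMonoOn_Ici_of_injOn_Ioi [ConditionallyCompleteLinearOrder α]
    [TopologicalSpace α] [OrderTopology α] [DenselyOrdered α] [LinearOrder β]
    [TopologicalSpace β] [OrderClosedTopology β] {f : α → β} {a : α}
    (hc : ContinuousOn f (Ici a)) (hi : InjOn f (Ioi a)) (ha : ∀ x ∈ Ioi a, f a < f x) :
    StrictMonoOn f (Ici a) := by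
  have hinj : InjOn f (Ici a) := by
    rw [← Ioi_insert, injOn_insert self_notMem_Ioi]
    exact ⟨hi, fun ⟨x, hx, hfx⟩ => (ha x hx).ne' hfx⟩
  intro u hu v hv huv
  have hav : a < v := lt_of_le_of_lt hu huv
  exact (hc.mono Icc_subset_Ici_self).strictMonoOn_of_injOn_Icc hav.le (ha v hav).le
    (hinj.mono Icc_subset_Ici_self) ⟨hu, huv.le⟩ ⟨hav.le, le_rfl⟩ huv

end Order

theorem hasDerivAt_of_mul_le_sub_le_mul {f g : ℝ → ℝ} {x : ℝ} (hg : ContinuousAt g x)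
    (hfg : ∀ᶠ y in 𝓝 x, (y - x) * g y ≤ f y - f x ∧ f y - f x ≤ (y - x) * g x) :
    HasDerivAt f (g x) x := by
  rw [hasDerivAt_iff_isLittleO]
  have hsmall : (fun y => (y - x) * (g y - g x)) =o[𝓝 x] fun y => (y - x) * 1 :=
    (Asymptotics.isBigO_refl _ _).mul_isLittleO
      ((Asymptotics.isLittleO_one_iff ℝ).2 (tendsto_sub_nhds_zero_iff.2 hg))
  simp only [mul_one] at hsmall
  refine (Asymptotics.IsBigO.of_bound' ?_).trans_isLittleO hsmall
  filter_upwards [hfg] with y ⟨hlo, hup⟩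
  have hneg := neg_abs_le ((y - x) * (g y - g x))
  have hpos := le_abs_self ((y - x) * (g y - g x))
  rw [smul_eq_mul, Real.norm_eq_abs, Real.norm_eq_abs, abs_le]
  constructor <;> linarith

/-- For `ζ = polyZeta a nmax` this is the mean of `k` under the weights `a k * w ^ k`; the
saddle-point equation `z ζ'(z) = n ζ(z)` reads `elasticity ζ z = n`. -/
noncomputable def elasticity (Z : ℝ → ℝ) (w : ℝ) : ℝ :=
  w * deriv Z w / Z w

section Elasticity

variable {Z : ℝ → ℝ}

@[simp]
theorem elasticity_zero : elasticity Z 0 = 0 := by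
  simp [elasticity]

theorem elasticity_eq_iff {w n : ℝ} (hZ : Z w ≠ 0) :
    elasticity Z w = n ↔ w * deriv Z w = n * Z w :=
  div_eq_iff hZ

theorem ContDiff.continuousOn_elasticity {s : Set ℝ} (hZ : ContDiff ℝ 1 Z)
    (hZs : ∀ w ∈ s, Z w ≠ 0) : ContinuousOn (elasticity Z) s :=
  (continuous_id.mul (hZ.continuous_deriv le_rfl)).continuousOn.div hZ.continuous.continuousOn hZs

theorem strictMonoOn_elasticity (hZ : ContDiff ℝ 1 Z) (hZpos : ∀ w, 0 ≤ w → 0 < Z w)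
    (hpos : ∀ w, 0 < w → 0 < elasticity Z w) (hinj : InjOn (elasticity Z) (Ioi 0)) :
    StrictMonoOn (elasticity Z) (Ioi 0) := by
  refine (ContinuousOn.strictMonoOn_Ici_of_injOn_Ioi ?_ hinj ?_).mono Ioi_subset_Ici_self
  · exact hZ.continuousOn_elasticity fun w hw => (hZpos w hw).ne'
  · simpa using hpos

theorem leftInvOn_elasticity_of_saddle {z0 : ℝ → ℝ} {s : Set ℝ} (hZpos : ∀ w, 0 < w → 0 < Z w)
    (hz0 : ∀ n ∈ s, 0 < z0 n ∧ z0 n * deriv Z (z0 n) = n * Z (z0 n)) :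
    LeftInvOn (elasticity Z) z0 s := fun n hn =>
  (elasticity_eq_iff (hZpos _ (hz0 n hn).1).ne').2 (hz0 n hn).2

theorem injOn_elasticity_of_saddle {z0 : ℝ → ℝ} {s : Set ℝ} (hZpos : ∀ w, 0 < w → 0 < Z w)
    (hG : MapsTo (elasticity Z) (Ioi 0) s)
    (huniq : ∀ n ∈ s, ∀ w, 0 < w → w * deriv Z w = n * Z w → w = z0 n) :
    InjOn (elasticity Z) (Ioi 0) := by
  have hz0 : ∀ w ∈ Ioi 0, w = z0 (elasticity Z w) := fun w hw =>
    huniq _ (hG hw) w hw ((elasticity_eq_iff (hZpos w hw).ne').1 rfl)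
  intro u hu v hv huv
  rw [hz0 u hu, hz0 v hv, huv]

/-- `w ↦ log ζ(w) - m log w` has derivative `(elasticity ζ w - m) / w`, so it decreases until the
elasticity reaches `m` and increases afterwards. -/
theorem isMinOn_log_sub_mul_log (hZ : Differentiable ℝ Z) (hZpos : ∀ w, 0 < w → 0 < Z w)
    (hG : MonotoneOn (elasticity Z) (Ioi 0)) {z : ℝ} (hz : 0 < z) :
    IsMinOn (fun w => log (Z w) - elasticity Z z * log w) (Ioi 0) z := by
  set φ := fun w => log (Z w) - elasticity Z z * log w
  set φ' := fun w => (elasticity Z w - elasticity Z z) / w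
  have hφ : ∀ w, 0 < w → HasDerivAt φ (φ' w) w := by
    intro w hw
    refine (((hZ w).hasDerivAt.log (hZpos w hw).ne').fun_sub
      ((hasDerivAt_log hw.ne').const_mul (elasticity Z z))).congr_deriv ?_
    simp only [φ', elasticity]
    field_simp
  have hcont : ContinuousOn φ (Ioi 0) := fun w hw => (hφ w hw).continuousAt.continuousWithinAt
  have hanti : AntitoneOn φ (Ioc 0 z) := by
    refine antitoneOn_of_hasDerivWithinAt_nonpos (f' := φ') (convex_Ioc 0 z)
      (hcont.mono Ioc_subset_Ioi_self) (fun w hw => ?_) fun w hw => ?_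
    all_goals rw [interior_Ioc] at hw
    · exact (hφ w hw.1).hasDerivWithinAt
    · exact div_nonpos_of_nonpos_of_nonneg (sub_nonpos.2 (hG hw.1 hz hw.2.le)) hw.1.le
  have hmono : MonotoneOn φ (Ici z) := by
    refine monotoneOn_of_hasDerivWithinAt_nonneg (f' := φ') (convex_Ici z)
      (hcont.mono fun w hw => hz.trans_le hw) (fun w hw => ?_) fun w hw => ?_
    all_goals rw [interior_Ici] at hw
    · exact (hφ w (hz.trans hw)).hasDerivWithinAt
    · exact div_nonneg (sub_nonneg.2 (hG hz (hz.trans hw) hw.le)) (hz.trans hw).le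
  rw [isMinOn_iff]
  intro w hw
  rcases le_total w z with h | h
  · exact hanti ⟨hw, h⟩ ⟨hz, le_rfl⟩ h
  · exact hmono self_mem_Ici h h

theorem hasDerivAt_log_comp_sub_mul_log {z0 : ℝ → ℝ} {s : Set ℝ} {n : ℝ}
    (hZ : Differentiable ℝ Z) (hZpos : ∀ w, 0 < w → 0 < Z w)
    (hG : MonotoneOn (elasticity Z) (Ioi 0)) (hz0 : MapsTo z0 s (Ioi 0))
    (hinv : LeftInvOn (elasticity Z) z0 s) (hs : s ∈ 𝓝 n) (hcont : ContinuousAt z0 n) :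
    HasDerivAt (fun m => log (Z (z0 m)) - m * log (z0 m)) (-log (z0 n)) n := by
  have hmin : ∀ m ∈ s, ∀ w, 0 < w →
      log (Z (z0 m)) - m * log (z0 m) ≤ log (Z w) - m * log w := fun m hm w hw => by
    simpa only [hinv hm] using isMinOn_iff.1 (isMinOn_log_sub_mul_log hZ hZpos hG (hz0 hm)) w hw
  have hn := mem_of_mem_nhds hs
  refine hasDerivAt_of_mul_le_sub_le_mul (g := fun m => -log (z0 m))
    (hcont.log (hz0 hn).ne').neg ?_
  filter_upwards [hs] with m hm
  -- evaluate the objective of `m` at `z₀ n` and that of `n` at `z₀ m`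
  have h₁ := hmin m hm _ (hz0 hn)
  have h₂ := hmin n hn _ (hz0 hm)
  constructor <;> linarith

end Elasticity

theorem contDiff_polyZeta (a : ℕ → ℕ) (nmax : ℕ) : ContDiff ℝ 1 (polyZeta a nmax) := by
  unfold polyZeta
  fun_prop

section PolyZeta

variable {a : ℕ → ℕ} {nmax : ℕ}

theorem polyZeta_pos (ha0 : 0 < a 0) {w : ℝ} (hw : 0 ≤ w) : 0 < polyZeta a nmax w := by
  rw [polyZeta, Finset.sum_range_succ', pow_zero, mul_one]
  exact add_pos_of_nonneg_of_pos (Finset.sum_nonneg fun _ _ => by positivity)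
    (by exact_mod_cast ha0)

theorem mul_deriv_polyZeta (w : ℝ) :
    w * deriv (polyZeta a nmax) w = ∑ k ∈ Finset.range (nmax + 1), (k : ℝ) * a k * w ^ k := by
  have hZ : HasDerivAt (polyZeta a nmax)
      (∑ k ∈ Finset.range (nmax + 1), (a k : ℝ) * (k * w ^ (k - 1))) w := by
    unfold polyZeta
    exact HasDerivAt.fun_sum fun k _ => (hasDerivAt_pow k w).const_mul _
  rw [hZ.deriv, Finset.mul_sum]
  refine Finset.sum_congr rfl fun k _ => ?_
  cases k with
  | zero => simp
  | succ k =>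
    rw [Nat.add_sub_cancel, pow_succ]
    ring

theorem elasticity_polyZeta_mem_Ioo (hnmax : 1 ≤ nmax) (ha0 : 0 < a 0) (hatop : 0 < a nmax)
    {w : ℝ} (hw : 0 < w) : elasticity (polyZeta a nmax) w ∈ Ioo 0 (nmax : ℝ) := by
  have hZ := polyZeta_pos (nmax := nmax) ha0 hw.le
  rw [elasticity, mul_deriv_polyZeta, mem_Ioo, lt_div_iff₀ hZ, div_lt_iff₀ hZ, zero_mul,
    polyZeta, Finset.mul_sum]
  have hn : (0 : ℝ) < nmax := by exact_mod_cast hnmax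
  constructor
  · refine Finset.sum_pos' (fun k _ => by positivity) ⟨nmax, Finset.self_mem_range_succ nmax, ?_⟩
    exact mul_pos (mul_pos hn (by exact_mod_cast hatop)) (pow_pos hw _)
  · have ha0' : (0 : ℝ) < a 0 := by exact_mod_cast ha0
    refine Finset.sum_lt_sum (fun k hk => ?_) ⟨0, by simp, by simpa using mul_pos hn ha0'⟩
    have hk : (k : ℝ) ≤ nmax := by exact_mod_cast Finset.mem_range_succ_iff.1 hk
    rw [← mul_assoc]
    gcongr

end PolyZeta

/-- For a polynomial ζ (n_max < ∞, a₀ > 0, a_{n_max} > 0), with z₀(n) the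
unique positive saddle point and β(n) = ln ζ(z₀(n)) − n ln z₀(n), there is a unique
n* ∈ (0, n_max) with β'(n*) = 0, namely n* = ζ'(1)/ζ(1); moreover β' > 0 on (0, n*)
and β' < 0 on (n*, n_max). -/
theorem typical_ee_beta_max (nmax : ℕ) (hnmax : 1 ≤ nmax) (a : ℕ → ℕ)
    (ha0 : 0 < a 0) (hatop : 0 < a nmax)
    (z0 : ℝ → ℝ)
    (hz0 : ∀ n : ℝ, n ∈ Set.Ioo (0 : ℝ) (nmax : ℝ) →
      0 < z0 n ∧ z0 n * deriv (polyZeta a nmax) (z0 n) = n * polyZeta a nmax (z0 n) ∧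
        (∀ w : ℝ, 0 < w →
          w * deriv (polyZeta a nmax) w = n * polyZeta a nmax w → w = z0 n)) :
    ∃ nstar : ℝ, nstar = deriv (polyZeta a nmax) 1 / polyZeta a nmax 1 ∧
      nstar ∈ Set.Ioo (0 : ℝ) (nmax : ℝ) ∧
      deriv (fun m : ℝ => Real.log (polyZeta a nmax (z0 m)) - m * Real.log (z0 m)) nstar = 0 ∧
      (∀ n ∈ Set.Ioo (0 : ℝ) nstar,
        0 < deriv (fun m : ℝ => Real.log (polyZeta a nmax (z0 m)) - m * Real.log (z0 m)) n) ∧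
      (∀ n ∈ Set.Ioo nstar (nmax : ℝ),
        deriv (fun m : ℝ => Real.log (polyZeta a nmax (z0 m)) - m * Real.log (z0 m)) n < 0) ∧
      (∀ n ∈ Set.Ioo (0 : ℝ) (nmax : ℝ),
        deriv (fun m : ℝ => Real.log (polyZeta a nmax (z0 m)) - m * Real.log (z0 m)) n = 0 →
          n = nstar) := by
  set Z := polyZeta a nmax
  have hZ : ContDiff ℝ 1 Z := contDiff_polyZeta a nmax
  have hZpos : ∀ w, 0 < w → 0 < Z w := fun w hw => polyZeta_pos ha0 hw.le
  have hGI : MapsTo (elasticity Z) (Ioi 0) (Ioo 0 nmax) := fun w =>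
    elasticity_polyZeta_mem_Ioo hnmax ha0 hatop
  have hz0I : MapsTo z0 (Ioo 0 nmax) (Ioi 0) := fun n hn => (hz0 n hn).1
  have hinv : LeftInvOn (elasticity Z) z0 (Ioo 0 nmax) :=
    leftInvOn_elasticity_of_saddle hZpos fun n hn => ⟨(hz0 n hn).1, (hz0 n hn).2.1⟩
  have hG : StrictMonoOn (elasticity Z) (Ioi 0) :=
    strictMonoOn_elasticity hZ (fun w hw => polyZeta_pos ha0 hw) (fun w hw => (hGI hw).1)
      (injOn_elasticity_of_saddle hZpos hGI fun n hn => (hz0 n hn).2.2)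
  have hz0mono : StrictMonoOn z0 (Ioo 0 nmax) := hG.strictMonoOn_of_leftInvOn hz0I hinv
  have hz0cont : ContinuousOn z0 (Ioo 0 nmax) :=
    hG.continuousOn_of_leftInvOn hGI hz0I hinv isOpen_Ioo isOpen_Ioi
  have hβ' : ∀ n ∈ Ioo (0 : ℝ) nmax,
      deriv (fun m => log (Z (z0 m)) - m * log (z0 m)) n = -log (z0 n) := fun n hn =>
    (hasDerivAt_log_comp_sub_mul_log (hZ.differentiable one_ne_zero) hZpos hG.monotoneOn hz0I
      hinv (isOpen_Ioo.mem_nhds hn) (hz0cont.continuousAt (isOpen_Ioo.mem_nhds hn))).deriv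
  have hstar : elasticity Z 1 ∈ Ioo 0 (nmax : ℝ) := hGI (mem_Ioi.2 one_pos)
  have hz0star : z0 (elasticity Z 1) = 1 :=
    hG.injOn (hz0I hstar) (mem_Ioi.2 one_pos) (hinv hstar)
  refine ⟨elasticity Z 1, by rw [elasticity, one_mul], hstar, ?_, fun n hn => ?_,
    fun n hn => ?_, fun n hn hd => ?_⟩
  · rw [hβ' _ hstar, hz0star, log_one, neg_zero]
  · have hnI : n ∈ Ioo (0 : ℝ) nmax := ⟨hn.1, hn.2.trans hstar.2⟩
    rw [hβ' n hnI, neg_pos, log_neg_iff (hz0I hnI), ← hz0star]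
    exact hz0mono hnI hstar hn.2
  · have hnI : n ∈ Ioo (0 : ℝ) nmax := ⟨hstar.1.trans hn.1, hn.2⟩
    rw [hβ' n hnI, neg_lt_zero, log_pos_iff (hz0I hnI).le, ← hz0star]
    exact hz0mono hstar hnI hn.1
  · rw [hβ' n hn, neg_eq_zero] at hd
    rw [← hinv hn, eq_one_of_pos_of_log_eq_zero (hz0I hn) hd]
end

section
/- For ζ_tot(z) = (1+z)/(1−z) (mixture of spinless fermions and bosons), the unique positive saddle point is z_0(n) = (√(1+n²) − 1)/n for n > 0, and β(n) = arcsinh(n) − n ln((√(1+n²) − 1)/n). -/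
/-!
Since `ζ'(z) = 2 / (1 - z)²`, the saddle-point equation `z ζ'(z) = n ζ(z)` on `z ≠ 1` is the
quadratic `n z² + 2 z - n = 0`, i.e. `(n z + 1)² = 1 + n²`, whose only nonnegative root is
`z₀ = (√(1 + n²) - 1) / n`. At that root `ζ(z₀) = n + √(1 + n²)`, whose logarithm is `arsinh n`.
-/

open Set

noncomputable def saddlePoint (n : ℝ) : ℝ := (√(1 + n ^ 2) - 1) / n

lemma deriv_one_add_div_one_sub {w : ℝ} (hw : w ≠ 1) :
    deriv (fun z : ℝ => (1 + z) / (1 - z)) w = 2 / (1 - w) ^ 2 := by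
  have hne : 1 - w ≠ 0 := sub_ne_zero.mpr hw.symm
  rw [(((hasDerivAt_id' w).const_add 1).fun_div ((hasDerivAt_id' w).const_sub 1) hne).deriv]
  field_simp
  ring

lemma saddle_equation_iff (n : ℝ) {w : ℝ} (hw : w ≠ 1) :
    w * deriv (fun z : ℝ => (1 + z) / (1 - z)) w = n * ((1 + w) / (1 - w)) ↔
      n * w ^ 2 + 2 * w - n = 0 := by
  have hne : 1 - w ≠ 0 := sub_ne_zero.mpr hw.symm
  rw [deriv_one_add_div_one_sub hw]
  field_simp
  constructor <;> intro h <;> linear_combination h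

lemma eq_saddlePoint_iff {n w : ℝ} (hn : 0 < n) (hw : 0 ≤ w) :
    n * w ^ 2 + 2 * w - n = 0 ↔ w = saddlePoint n := by
  have hs : √(1 + n ^ 2) ^ 2 = 1 + n ^ 2 := Real.sq_sqrt (by positivity)
  rw [saddlePoint, eq_div_iff hn.ne', eq_sub_iff_add_eq]
  constructor
  · intro h
    refine (Real.sqrt_eq_iff_mul_self_eq_of_pos (by positivity)).2 ?_ |>.symm
    linear_combination n * h
  · intro h
    apply mul_left_cancel₀ hn.ne'
    linear_combination (n * w + 1 + √(1 + n ^ 2)) * h + hs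

lemma saddlePoint_mem_Ioo {n : ℝ} (hn : 0 < n) : saddlePoint n ∈ Ioo 0 1 := by
  have hs : √(1 + n ^ 2) ^ 2 = 1 + n ^ 2 := Real.sq_sqrt (by positivity)
  have hs0 : 0 ≤ √(1 + n ^ 2) := Real.sqrt_nonneg _
  have h1 : 1 < √(1 + n ^ 2) := by nlinarith
  have h2 : √(1 + n ^ 2) < 1 + n := by nlinarith
  exact ⟨div_pos (by linarith) hn, (div_lt_one hn).2 (by linarith)⟩

lemma one_add_saddlePoint_div_one_sub {n : ℝ} (hn : 0 < n) :
    (1 + saddlePoint n) / (1 - saddlePoint n) = n + √(1 + n ^ 2) := by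
  have hs : √(1 + n ^ 2) ^ 2 = 1 + n ^ 2 := Real.sq_sqrt (by positivity)
  have hz := saddlePoint_mem_Ioo hn
  rw [div_eq_iff (by linarith [hz.2]), saddlePoint]
  field_simp
  linear_combination hs

/-- For ζ(z) = (1+z)/(1−z) (mixture of spinless fermions and bosons):
the unique positive saddle point is z₀(n) = (√(1+n²) − 1)/n for n > 0, and
β(n) = ln ζ(z₀(n)) − n ln z₀(n) = arcsinh(n) − n ln((√(1+n²) − 1)/n). -/
theorem typical_ee_fermion_boson_mixture :
    ∀ n : ℝ, 0 < n →
      (Real.sqrt (1 + n ^ 2) - 1) / n ∈ Set.Ioo (0 : ℝ) 1 ∧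
      (Real.sqrt (1 + n ^ 2) - 1) / n *
          deriv (fun z : ℝ => (1 + z) / (1 - z)) ((Real.sqrt (1 + n ^ 2) - 1) / n) =
        n * ((1 + (Real.sqrt (1 + n ^ 2) - 1) / n) / (1 - (Real.sqrt (1 + n ^ 2) - 1) / n)) ∧
      (∀ w : ℝ, w ∈ Set.Ioo (0 : ℝ) 1 →
        w * deriv (fun z : ℝ => (1 + z) / (1 - z)) w = n * ((1 + w) / (1 - w)) →
          w = (Real.sqrt (1 + n ^ 2) - 1) / n) ∧
      Real.log ((1 + (Real.sqrt (1 + n ^ 2) - 1) / n) / (1 - (Real.sqrt (1 + n ^ 2) - 1) / n)) -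
          n * Real.log ((Real.sqrt (1 + n ^ 2) - 1) / n) =
        Real.arsinh n - n * Real.log ((Real.sqrt (1 + n ^ 2) - 1) / n) := by
  intro n hn
  have hz := saddlePoint_mem_Ioo hn
  refine ⟨hz, (saddle_equation_iff n hz.2.ne).2 ((eq_saddlePoint_iff hn hz.1.le).2 rfl),
    fun w hw h => (eq_saddlePoint_iff hn hw.1.le).1 ((saddle_equation_iff n hw.2.ne).1 h), ?_⟩
  rw [← saddlePoint, one_add_saddlePoint_div_one_sub hn, Real.arsinh]
end
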